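/- Let σ² > 0, let I ⊂ [0,1] be a closed interval not containing t* = 1/(1+σ²), and let g : σ⊥²(I) → I be the inverse of σ⊥² on I, with Lipschitz constant C. Fix t ∈ I and let ŝ = σ⊥²(t)·Y/m with Y ~ χ²_m; define t̂ = g(Π(ŝ)), where Π is the projection onto the interval σ⊥²(I). Then for every δ > 0, P(|t̂ − t| ≥ δ) ≤ 2 C² σ⊥²(t)² / (m δ²); in particular |t̂ − t| = O_p(1/√m). -/

import Mathlib

open MeasureTheory ProbabilityTheory

/-- The chi-square distribution with `m` degrees of freedom. -/
noncomputable def chiSq (m : ℕ) : Measure ℝ :=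
  (Measure.pi fun _ : Fin m => gaussianReal 0 1).map (fun x => ∑ i, (x i) ^ 2)

open Real Filter Set
open scoped ENNReal NNReal

namespace TimeEstAux

set_option maxRecDepth 4000

lemma tendsto_pow_exp_atTop (n : ℕ) :
    Tendsto (fun x : ℝ => x ^ n * Real.exp (-x ^ 2 / 2)) atTop (nhds 0) := by
  have h0 : Tendsto (fun x : ℝ => -(1/2) * x) atTop atBot :=
    tendsto_id.const_mul_atTop_of_neg (by norm_num)
  have h := (rpow_mul_exp_neg_mul_sq_isLittleO_exp_neg (by norm_num : (0:ℝ) < 1/2)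
    (n : ℝ)).trans_tendsto (Real.tendsto_exp_atBot.comp h0)
  have : (fun x : ℝ => x ^ (n : ℝ) * Real.exp (-(1/2) * x ^ 2))
      = fun x : ℝ => x ^ n * Real.exp (-x ^ 2 / 2) := by
    funext x; rw [Real.rpow_natCast]; ring_nf
  rwa [this] at h

lemma tendsto_pow_exp_atBot (n : ℕ) :
    Tendsto (fun x : ℝ => x ^ n * Real.exp (-x ^ 2 / 2)) atBot (nhds 0) := by
  have h := ((tendsto_pow_exp_atTop n).comp tendsto_neg_atBot_atTop).const_mul ((-1 : ℝ) ^ n)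
  rw [mul_zero] at h
  have : ((-1 : ℝ) ^ n) • ((fun x : ℝ => x ^ n * Real.exp (-x ^ 2 / 2)) ∘ Neg.neg)
      = fun x : ℝ => x ^ n * Real.exp (-x ^ 2 / 2) := by
    funext x
    simp only [Pi.smul_apply, Function.comp_apply, smul_eq_mul]
    rw [show ((-x) ^ n : ℝ) = (-1) ^ n * x ^ n from neg_pow x n, neg_sq,
      ← mul_assoc, ← mul_assoc, ← mul_pow, neg_mul_neg, one_mul, one_pow, one_mul]
  rwa [show (fun x : ℝ => (-1:ℝ) ^ n * ((fun x : ℝ => x ^ n * Real.exp (-x ^ 2 / 2)) ∘ Neg.neg) x)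
      = ((-1 : ℝ) ^ n) • ((fun x : ℝ => x ^ n * Real.exp (-x ^ 2 / 2)) ∘ Neg.neg) from rfl,
    this] at h

lemma integrable_pow_exp (n : ℕ) :
    Integrable (fun x : ℝ => x ^ n * Real.exp (-x ^ 2 / 2)) := by
  have h := integrable_rpow_mul_exp_neg_mul_sq (by norm_num : (0:ℝ) < 1/2)
    (s := (n : ℝ)) (lt_of_lt_of_le (by norm_num) (Nat.cast_nonneg n))
  have : (fun x : ℝ => x ^ (n : ℝ) * Real.exp (-(1/2) * x ^ 2))
      = fun x : ℝ => x ^ n * Real.exp (-x ^ 2 / 2) := by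
    funext x; rw [Real.rpow_natCast]; ring_nf
  rwa [this] at h

lemma integral_pow_exp_step (n : ℕ) :
    ∫ x : ℝ, x ^ (n + 2) * Real.exp (-x ^ 2 / 2)
      = (n + 1 : ℝ) * ∫ x : ℝ, x ^ n * Real.exp (-x ^ 2 / 2) := by
  set F : ℝ → ℝ := fun x => -(x ^ (n + 1) * Real.exp (-x ^ 2 / 2)) with hF
  set f' : ℝ → ℝ := fun x =>
    x ^ (n + 2) * Real.exp (-x ^ 2 / 2) - (n + 1 : ℝ) * (x ^ n * Real.exp (-x ^ 2 / 2)) with hf'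
  have hderiv : ∀ x : ℝ, HasDerivAt F (f' x) x := by
    intro x
    have h1 : HasDerivAt (fun y : ℝ => -y ^ 2 / 2) (-x) x := by
      have := ((hasDerivAt_pow 2 x).neg).div_const 2
      exact this.congr_deriv (by norm_num; ring)
    have h2 := h1.exp
    have h3 := (hasDerivAt_pow (n + 1) x).mul h2
    have h4 := h3.neg
    refine h4.congr_deriv ?_
    simp only [hf', Nat.cast_add, Nat.cast_one, Nat.add_sub_cancel]
    ring
  have hint : Integrable f' := by
    exact (integrable_pow_exp (n + 2)).sub ((integrable_pow_exp n).const_mul _)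
  have htop : Tendsto F atTop (nhds 0) := by
    have := (tendsto_pow_exp_atTop (n + 1)).neg
    rwa [neg_zero] at this
  have hbot : Tendsto F atBot (nhds 0) := by
    have := (tendsto_pow_exp_atBot (n + 1)).neg
    rwa [neg_zero] at this
  have hIic : ∫ x in Iic (0:ℝ), f' x = F 0 - 0 :=
    integral_Iic_of_hasDerivAt_of_tendsto' (fun x _ => hderiv x) hint.integrableOn hbot
  have hIoi : ∫ x in Ioi (0:ℝ), f' x = 0 - F 0 :=
    integral_Ioi_of_hasDerivAt_of_tendsto' (fun x _ => hderiv x) hint.integrableOn htop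
  have htotal : ∫ x : ℝ, f' x = 0 := by
    rw [← intervalIntegral.integral_Iic_add_Ioi hint.integrableOn hint.integrableOn, hIic, hIoi]; ring
  have hsplit : ∫ x : ℝ, f' x
      = (∫ x : ℝ, x ^ (n + 2) * Real.exp (-x ^ 2 / 2))
        - (n + 1 : ℝ) * ∫ x : ℝ, x ^ n * Real.exp (-x ^ 2 / 2) := by
    rw [hf']
    rw [integral_sub (integrable_pow_exp (n + 2)) ((integrable_pow_exp n).const_mul _),
      integral_const_mul]
  linarith [htotal, hsplit.symm.trans htotal]

lemma integral_exp_base : ∫ x : ℝ, Real.exp (-x ^ 2 / 2) = Real.sqrt (2 * π) := by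
  have h := integral_gaussian (1/2)
  have : (fun x : ℝ => Real.exp (-(1/2) * x ^ 2)) = fun x : ℝ => Real.exp (-x ^ 2 / 2) := by
    funext x; ring_nf
  rw [this] at h
  rw [h]; rw [show π / (1/2) = 2 * π by ring]

lemma integral_sq_exp : ∫ x : ℝ, x ^ 2 * Real.exp (-x ^ 2 / 2) = Real.sqrt (2 * π) := by
  have h := integral_pow_exp_step 0
  simp only [pow_zero, one_mul, Nat.cast_zero, zero_add] at h
  rw [h, integral_exp_base]

lemma integral_quartic_exp :
    ∫ x : ℝ, x ^ 4 * Real.exp (-x ^ 2 / 2) = 3 * Real.sqrt (2 * π) := by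
  have h := integral_pow_exp_step 2
  norm_num at h
  rw [h, integral_sq_exp]


noncomputable abbrev gauss : Measure ℝ := gaussianReal 0 1

lemma pdf_eq (x : ℝ) :
    gaussianPDFReal 0 1 x = (Real.sqrt (2 * π))⁻¹ * Real.exp (-x ^ 2 / 2) := by
  simp [gaussianPDFReal, NNReal.coe_one, mul_one, sub_zero]

lemma gauss_eq : gauss = Measure.withDensity volume
    (fun x => ((gaussianPDFReal 0 1 x).toNNReal : ℝ≥0∞)) := by
  rw [show gauss = gaussianReal 0 1 from rfl, gaussianReal_of_var_ne_zero 0 one_ne_zero]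
  rfl

lemma integral_gauss (g : ℝ → ℝ) :
    ∫ x, g x ∂gauss = ∫ x, gaussianPDFReal 0 1 x * g x := by
  rw [gauss_eq, integral_withDensity_eq_integral_smul
    ((measurable_gaussianPDFReal 0 1).real_toNNReal) g]
  congr 1
  funext x
  rw [NNReal.smul_def, smul_eq_mul, Real.coe_toNNReal _ (gaussianPDFReal_nonneg 0 1 x)]

lemma integrable_pow_gauss (n : ℕ) : Integrable (fun x : ℝ => x ^ n) gauss := by
  rw [gauss_eq, integrable_withDensity_iff_integrable_smul
    ((measurable_gaussianPDFReal 0 1).real_toNNReal)]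
  have : (fun x : ℝ => (gaussianPDFReal 0 1 x).toNNReal • x ^ n)
      = fun x : ℝ => (Real.sqrt (2 * π))⁻¹ * (x ^ n * Real.exp (-x ^ 2 / 2)) := by
    funext x
    rw [NNReal.smul_def, smul_eq_mul, Real.coe_toNNReal _ (gaussianPDFReal_nonneg 0 1 x), pdf_eq]
    ring
  rw [this]
  exact (integrable_pow_exp n).const_mul _

lemma integral_pow_gauss (n : ℕ) :
    ∫ x, x ^ n ∂gauss
      = (Real.sqrt (2 * π))⁻¹ * ∫ x : ℝ, x ^ n * Real.exp (-x ^ 2 / 2) := by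
  rw [integral_gauss fun x => x ^ n, ← integral_const_mul]
  congr 1
  funext x
  rw [pdf_eq]; ring

lemma sqrt_two_pi_pos : 0 < Real.sqrt (2 * π) := by positivity

lemma integral_sq_gauss : ∫ x, x ^ 2 ∂gauss = 1 := by
  rw [integral_pow_gauss 2, integral_sq_exp, inv_mul_cancel₀ sqrt_two_pi_pos.ne']

lemma integral_quartic_gauss : ∫ x, x ^ 4 ∂gauss = 3 := by
  rw [integral_pow_gauss 4, integral_quartic_exp, mul_left_comm,
    inv_mul_cancel₀ sqrt_two_pi_pos.ne', mul_one]

lemma integral_zero_pow_gauss : ∫ x, x ^ 0 ∂gauss = 1 := by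
  simp


noncomputable abbrev piG (m : ℕ) : Measure (Fin m → ℝ) := Measure.pi fun _ => gauss

lemma piG_integral_prod {m : ℕ} (p : Fin m → ℕ) :
    ∫ x : Fin m → ℝ, ∏ i, (x i) ^ (p i) ∂(piG m) = ∏ i, ∫ y : ℝ, y ^ (p i) ∂gauss :=
  @integral_fin_nat_prod_eq_prod ℝ _ m (fun _ => ℝ)
    (fun _ => inferInstance) (fun _ => gauss)
    (fun _ => by exact (inferInstance : SigmaFinite gauss)) (fun i y => y ^ (p i))

lemma piG_integrable_prod {m : ℕ} (p : Fin m → ℕ) :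
    Integrable (fun x : Fin m → ℝ => ∏ i, (x i) ^ (p i)) (piG m) :=
  @Integrable.fin_nat_prod ℝ _ m (fun _ => ℝ) (fun _ => inferInstance) (fun _ => gauss)
    (fun _ => by exact (inferInstance : SigmaFinite gauss)) (fun i y => y ^ (p i))
    (fun i => integrable_pow_gauss (p i))

lemma single_pow {m : ℕ} (i : Fin m) (n : ℕ) (x : Fin m → ℝ) :
    (x i) ^ n = ∏ k, (x k) ^ (if k = i then n else 0) := by
  rw [Finset.prod_eq_single i (fun b _ hb => by simp [hb]) (by simp)]
  simp

lemma pair_pow {m : ℕ} (i j : Fin m) (x : Fin m → ℝ) :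
    (x i) ^ 2 * (x j) ^ 2
      = ∏ k, (x k) ^ ((if k = i then 2 else 0) + (if k = j then 2 else 0)) := by
  simp_rw [pow_add]
  rw [Finset.prod_mul_distrib, ← single_pow i 2 x, ← single_pow j 2 x]

lemma integrable_coord_sq {m : ℕ} (i : Fin m) :
    Integrable (fun x : Fin m → ℝ => (x i) ^ 2) (piG m) := by
  have := piG_integrable_prod (fun k => if k = i then 2 else 0)
  simpa [← single_pow i 2] using this

lemma integral_coord_sq {m : ℕ} (i : Fin m) :
    ∫ x : Fin m → ℝ, (x i) ^ 2 ∂(piG m) = 1 := by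
  have h := piG_integral_prod (m := m) (fun k => if k = i then 2 else 0)
  simp_rw [← single_pow i 2] at h
  rw [h, Finset.prod_eq_single i (fun b _ hb => by simp [hb]) (by simp)]
  simp [integral_sq_gauss]

lemma integrable_coord_pair {m : ℕ} (i j : Fin m) :
    Integrable (fun x : Fin m → ℝ => (x i) ^ 2 * (x j) ^ 2) (piG m) := by
  have := piG_integrable_prod (fun k => (if k = i then 2 else 0) + (if k = j then 2 else 0))
  simpa [← pair_pow i j] using this

lemma integral_coord_pair {m : ℕ} (i j : Fin m) :
    ∫ x : Fin m → ℝ, (x i) ^ 2 * (x j) ^ 2 ∂(piG m) = if i = j then 3 else 1 := by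
  have h := piG_integral_prod (m := m)
    (fun k => (if k = i then 2 else 0) + (if k = j then 2 else 0))
  simp_rw [← pair_pow i j] at h
  rw [h]
  by_cases hij : i = j
  · subst hij
    rw [if_pos rfl, Finset.prod_eq_single i (fun b _ hb => by simp [hb]) (by simp)]
    simp [integral_quartic_gauss]
  · rw [if_neg hij]
    have key : ∀ k : Fin m,
        (∫ y : ℝ, y ^ ((if k = i then 2 else 0) + (if k = j then 2 else 0)) ∂gauss) = 1 := by
      intro k
      by_cases hki : k = i
      · subst hki
        rw [if_pos rfl, if_neg hij]
        simpa using integral_sq_gauss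
      · rw [if_neg hki]
        by_cases hkj : k = j
        · subst hkj
          rw [if_pos rfl]
          simpa using integral_sq_gauss
        · rw [if_neg hkj]
          simp
    simp_rw [key]
    simp


section Moments

variable {m : ℕ}

noncomputable def Y (m : ℕ) : (Fin m → ℝ) → ℝ := fun x => ∑ i, (x i) ^ 2

lemma Y_meas : Measurable (Y m) :=
  Finset.measurable_sum _ fun i _ => (measurable_pi_apply i).pow_const 2

lemma Y_int : Integrable (Y m) (piG m) :=
  integrable_finset_sum _ fun i _ => integrable_coord_sq i

lemma EY : ∫ x, Y m x ∂(piG m) = m := by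
  unfold Y
  rw [integral_finset_sum _ fun i _ => integrable_coord_sq i]
  simp [integral_coord_sq]

lemma Ysq_eq : (fun x => Y m x ^ 2) = fun x : Fin m → ℝ => ∑ i, ∑ j, (x i) ^ 2 * (x j) ^ 2 := by
  funext x
  unfold Y
  rw [sq, Finset.sum_mul_sum]

lemma Ysq_int : Integrable (fun x => Y m x ^ 2) (piG m) := by
  rw [Ysq_eq]
  exact integrable_finset_sum _ fun i _ =>
    integrable_finset_sum _ fun j _ => integrable_coord_pair i j

lemma EYsq : ∫ x, Y m x ^ 2 ∂(piG m) = (m : ℝ) ^ 2 + 2 * m := by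
  rw [Ysq_eq, integral_finset_sum _ fun i _ =>
    integrable_finset_sum _ fun j _ => integrable_coord_pair i j]
  have h1 : ∀ i : Fin m, ∫ x : Fin m → ℝ, ∑ j, (x i) ^ 2 * (x j) ^ 2 ∂(piG m) = (m : ℝ) + 2 := by
    intro i
    rw [integral_finset_sum _ fun j _ => integrable_coord_pair i j]
    simp_rw [integral_coord_pair]
    have h2 : ∀ j : Fin m, (if i = j then (3:ℝ) else 1) = (if i = j then (2:ℝ) else 0) + 1 :=
      fun j => by split <;> norm_num
    simp_rw [h2]
    rw [Finset.sum_add_distrib, Finset.sum_ite_eq, if_pos (Finset.mem_univ i),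
      Finset.sum_const, Finset.card_univ, Fintype.card_fin, nsmul_eq_mul, mul_one]
    ring
  simp only [h1]
  rw [Finset.sum_const, Finset.card_univ, Fintype.card_fin, nsmul_eq_mul]
  ring

variable (v : ℝ) (hm : 0 < m)

noncomputable def X (m : ℕ) (v : ℝ) : (Fin m → ℝ) → ℝ := fun x => v / m * Y m x

lemma X_int : Integrable (X m v) (piG m) := (Y_int).const_mul _

lemma EX (hm : 0 < m) : ∫ x, X m v x ∂(piG m) = v := by
  unfold X
  rw [integral_const_mul, EY]
  field_simp

lemma X_mem : MemLp (X m v) 2 (piG m) := by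
  rw [memLp_two_iff_integrable_sq (X_int v).aestronglyMeasurable]
  have h : (fun x => X m v x ^ 2) = fun x => (v / m) ^ 2 * Y m x ^ 2 := by
    funext x; unfold X; ring
  rw [h]
  exact Ysq_int.const_mul _

lemma X_var (hm : 0 < m) : variance (X m v) (piG m) = 2 * v ^ 2 / m := by
  have hmne : (m : ℝ) ≠ 0 := Nat.cast_ne_zero.mpr hm.ne'
  rw [variance_eq_sub (X_mem v)]
  have h : (X m v ^ 2 : (Fin m → ℝ) → ℝ) = fun x => (v / m) ^ 2 * Y m x ^ 2 := by
    funext x; simp only [Pi.pow_apply]; unfold X; ring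
  rw [h, integral_const_mul, EYsq, EX v hm]
  field_simp
  ring

end Moments


end TimeEstAux

open TimeEstAux

/-- Identifiability of the interpolation time: if `ŝ = σ⊥²(t)·Y/m` with
`Y ~ χ²_m`, `g` is a `C`-Lipschitz inverse of the variance clock on a closed
interval `I = [a,b]` avoiding `t* = 1/(1+σ²)`, and `t̂ = g(Π(ŝ))` where `Π`
projects onto `σ⊥²(I)`, then `P(|t̂ − t| ≥ δ) ≤ 2C²σ⊥²(t)²/(mδ²)`. -/
theorem time_estimator_concentration
    (s a b : ℝ) (hs : 0 < s) (hab : a ≤ b) (hI : Set.Icc a b ⊆ Set.Icc (0 : ℝ) 1)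
    (hcrit : (1 / (1 + s)) ∉ Set.Icc a b)
    (g : ℝ → ℝ) (C : NNReal)
    (hg : Set.InvOn g (fun t : ℝ => (1 - t) ^ 2 + t ^ 2 * s)
        (Set.Icc a b) ((fun t : ℝ => (1 - t) ^ 2 + t ^ 2 * s) '' Set.Icc a b))
    (hLip : LipschitzOnWith C g ((fun t : ℝ => (1 - t) ^ 2 + t ^ 2 * s) '' Set.Icc a b))
    (t : ℝ) (htI : t ∈ Set.Icc a b) (m : ℕ) (hm : 0 < m) :
    ∀ δ : ℝ, 0 < δ →
      ((chiSq m).map (fun y => ((1 - t) ^ 2 + t ^ 2 * s) * y / m))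
          {x : ℝ |
            δ ≤ |g (max (sInf ((fun t : ℝ => (1 - t) ^ 2 + t ^ 2 * s) '' Set.Icc a b))
                      (min (sSup ((fun t : ℝ => (1 - t) ^ 2 + t ^ 2 * s) '' Set.Icc a b)) x)) - t|}
        ≤ ENNReal.ofReal
            (2 * (C : ℝ) ^ 2 * ((1 - t) ^ 2 + t ^ 2 * s) ^ 2 / (m * δ ^ 2)) := by
  intro δ hδ
  set F : ℝ → ℝ := fun u => (1 - u) ^ 2 + u ^ 2 * s with hF
  set v : ℝ := (1 - t) ^ 2 + t ^ 2 * s with hv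
  set K : Set ℝ := F '' Set.Icc a b with hK
  have hFcont : Continuous F := by fun_prop
  have hKcpt : IsCompact K := (isCompact_Icc).image hFcont
  have hKconn : IsPreconnected K := (isPreconnected_Icc).image F hFcont.continuousOn
  have hvK : v ∈ K := ⟨t, htI, rfl⟩
  have hKne : K.Nonempty := ⟨v, hvK⟩
  have hInfK : sInf K ∈ K := hKcpt.sInf_mem hKne
  have hSupK : sSup K ∈ K := hKcpt.sSup_mem hKne
  have hIccsub : Set.Icc (sInf K) (sSup K) ⊆ K := hKconn.Icc_subset hInfK hSupK
  have h1 : sInf K ≤ v := csInf_le hKcpt.bddBelow hvK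
  have h2 : v ≤ sSup K := le_csSup hKcpt.bddAbove hvK
  set P : ℝ → ℝ := fun x => max (sInf K) (min (sSup K) x) with hP
  have hPK : ∀ x, P x ∈ K := fun x =>
    hIccsub ⟨le_max_left _ _, max_le (h1.trans h2) (min_le_left _ _)⟩
  have hclamp : ∀ x, |P x - v| ≤ |x - v| := by
    intro x
    rcases le_total x (sInf K) with h | h
    · have hx : min (sSup K) x = x := min_eq_right (h.trans (h1.trans h2))
      simp only [hP, hx, max_eq_left h]
      rw [abs_sub_comm, abs_of_nonneg (sub_nonneg.2 h1), abs_sub_comm x v,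
        abs_of_nonneg (sub_nonneg.2 (h.trans h1))]
      linarith
    · rcases le_total (sSup K) x with h' | h'
      · simp only [hP, min_eq_left h', max_eq_right (h1.trans h2)]
        rw [abs_of_nonneg (sub_nonneg.2 h2), abs_of_nonneg (sub_nonneg.2 (h2.trans h'))]
        linarith
      · simp only [hP, min_eq_right h', max_eq_right h, le_refl]
  have hgv : g v = t := hg.1 htI
  have hsubC : {x : ℝ | δ ≤ |g (P x) - t|} ⊆ {x : ℝ | δ ≤ (C : ℝ) * |x - v|} := by
    intro x hx
    simp only [Set.mem_setOf_eq] at hx ⊢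
    have hd := hLip.dist_le_mul (P x) (hPK x) v hvK
    rw [Real.dist_eq, Real.dist_eq, hgv] at hd
    calc δ ≤ |g (P x) - t| := hx
      _ ≤ (C : ℝ) * |P x - v| := hd
      _ ≤ (C : ℝ) * |x - v| := mul_le_mul_of_nonneg_left (hclamp x) C.coe_nonneg
  -- the measure: (chiSq m).map φ = (piG m).map (φ ∘ Y m)
  set φ : ℝ → ℝ := fun y => v * y / m with hφdef
  have hφ : Measurable φ := (measurable_id.const_mul v).div_const m
  have hchi : chiSq m = (piG m).map (Y m) := rfl
  have hmapeq : (chiSq m).map φ = (piG m).map (φ ∘ Y m) := by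
    rw [hchi, Measure.map_map hφ Y_meas]
  by_cases hC : (C : ℝ) = 0
  · have hempty : {x : ℝ | δ ≤ |g (P x) - t|} = (∅ : Set ℝ) := by
      apply Set.eq_empty_iff_forall_notMem.2
      intro x hx
      have := hsubC hx
      simp only [Set.mem_setOf_eq, hC, zero_mul] at this
      linarith
    show ((chiSq m).map φ) {x : ℝ | δ ≤ |g (P x) - t|} ≤ _
    rw [hempty]
    simp
  · have hCpos : 0 < (C : ℝ) := lt_of_le_of_ne C.coe_nonneg (Ne.symm hC)
    set T : Set ℝ := {x : ℝ | δ / C ≤ |x - v|} with hT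
    have hsub2 : {x : ℝ | δ ≤ |g (P x) - t|} ⊆ T := by
      intro x hx
      have := hsubC hx
      show δ / (C : ℝ) ≤ |x - v|
      rw [div_le_iff₀ hCpos, mul_comm]
      exact this
    have hTmeas : MeasurableSet T :=
      (isClosed_le continuous_const ((continuous_id.sub continuous_const).abs)).measurableSet
    have hpre : (φ ∘ Y m) ⁻¹' T = {ω : Fin m → ℝ | δ / C ≤ |X m v ω - ∫ x, X m v x ∂(piG m)|} := by
      ext ω
      simp only [Set.mem_preimage, Set.mem_setOf_eq, Function.comp_apply, hT, EX v hm]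
      have : φ (Y m ω) = X m v ω := by unfold φ; unfold X; ring
      rw [this]
    have cheb := meas_ge_le_variance_div_sq (μ := piG m) (X_mem v) (div_pos hδ hCpos)
    calc ((chiSq m).map φ) {x : ℝ | δ ≤ |g (P x) - t|}
        ≤ ((chiSq m).map φ) T := measure_mono hsub2
      _ = (piG m) ((φ ∘ Y m) ⁻¹' T) := by
          rw [hmapeq, Measure.map_apply (hφ.comp Y_meas) hTmeas]
      _ ≤ ENNReal.ofReal (variance (X m v) (piG m) / (δ / C) ^ 2) := by
          rw [hpre]; exact cheb
      _ ≤ ENNReal.ofReal (2 * (C : ℝ) ^ 2 * v ^ 2 / (m * δ ^ 2)) := by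
          apply ENNReal.ofReal_le_ofReal
          have hmne : (m : ℝ) ≠ 0 := Nat.cast_ne_zero.mpr hm.ne'
          have harith : (2 * v ^ 2 / m) / (δ / C) ^ 2
              = 2 * (C : ℝ) ^ 2 * v ^ 2 / (m * δ ^ 2) := by
            field_simp
          rw [X_var v hm, harith]
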